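/- Fix an integer n ≥ 1, a real p with 0 < p ≤ 1, and a real δ with 0 < δ < 1. Define the joint outage probability p_o^{(n)}(Δ) = 1 − ∑_{k=1}^n (−1)^{k+1} · (n choose k) · exp(−Δ · D_k(p,δ)) for Δ > 0. Then the limit as Δ → 0⁺ of δ · log(p_o^{(n)}(Δ)) / log(Δ) exists and equals δ, independently of n. -/

import Mathlib

/-!
Since `D_0 = 0`, the outage probability is the alternating binomial sum
`∑_{k=0}^n (-1)^k C(n,k) exp(-Δ D_k)`: it vanishes at `Δ = 0`, and its derivative there is
`-∑_k (-1)^k C(n,k) D_k`. Writing `D_k = ∑_m C(k,m) t_m`, binomial inversion evaluates this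
to `(-1)^(n+1) t_n`, which is nonzero because `δ` is not a positive integer. Hence
`p_o(Δ) ~ c Δ` with `c ≠ 0`, so `log p_o(Δ) / log Δ → 1`.
-/

open Real Filter Set

/-- Diversity polynomial `D_n(p,δ) = ∑_{k=1}^n C(n,k) ((∏_{j=1}^{k-1} (δ-j))/(k-1)!) p^k`. -/
noncomputable def divPoly (n : ℕ) (p δ : ℝ) : ℝ :=
  ∑ k ∈ Finset.Icc 1 n, (n.choose k : ℝ) *
    ((∏ j ∈ Finset.Icc 1 (k - 1), (δ - (j : ℝ))) / (Nat.factorial (k - 1) : ℝ)) * p ^ k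

/-- Joint outage probability of `n` transmissions. -/
noncomputable def outageProb (n : ℕ) (p δ Δ : ℝ) : ℝ :=
  1 - ∑ k ∈ Finset.Icc 1 n, (-1 : ℝ) ^ (k + 1) * (n.choose k : ℝ) *
    Real.exp (-Δ * divPoly k p δ)

open Finset Topology

theorem sum_range_succ_eq_add_sum_Icc {M : Type*} [AddCommMonoid M] (f : ℕ → M) (n : ℕ) :
    ∑ k ∈ range (n + 1), f k = f 0 + ∑ k ∈ Icc 1 n, f k := by
  rw [range_eq_Ico, sum_eq_sum_Ico_succ_bot (by omega : 0 < n + 1), zero_add,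
    Finset.Ico_add_one_right_eq_Icc]

theorem neg_one_pow_mul_neg_one_pow_sub {R : Type*} [Monoid R] [HasDistribNeg R] {k n : ℕ}
    (h : k ≤ n) : (-1 : R) ^ n * (-1) ^ (n - k) = (-1) ^ k := by
  obtain ⟨d, rfl⟩ := Nat.exists_eq_add_of_le h
  rw [Nat.add_sub_cancel_left, pow_add, mul_assoc, ← pow_add, Even.neg_one_pow ⟨d, rfl⟩, mul_one]

open fwdDiff in
theorem Int.alternating_sum_range_choose_mul_choose (n m : ℕ) :
    ∑ k ∈ Finset.range (n + 1), (-1) ^ (n - k) * (n.choose k : ℤ) * k.choose m =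
      if n = m then 1 else 0 := by
  simpa [fwdDiff_iter_eq_sum_shift] using fwdDiff_iter_choose_zero m n

theorem sum_range_alternating_choose (R : Type*) [CommRing R] {n : ℕ} (hn : n ≠ 0) :
    ∑ k ∈ range (n + 1), (-1 : R) ^ (n - k) * n.choose k = 0 := by
  have h := congrArg (Int.cast : ℤ → R)
    ((Int.alternating_sum_range_choose_mul_choose n 0).trans (if_neg hn))
  simpa using h

theorem sum_range_alternating_choose_mul_sum_choose {R : Type*} [CommRing R] (a : ℕ → R)
    (n : ℕ) :
    ∑ k ∈ range (n + 1), (-1) ^ (n - k) * (n.choose k : R) *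
      ∑ m ∈ range (k + 1), (k.choose m : R) * a m = a n := by
  calc _ = ∑ k ∈ range (n + 1), ∑ m ∈ range (n + 1),
        (-1) ^ (n - k) * (n.choose k : R) * ((k.choose m : R) * a m) := by
        refine sum_congr rfl fun k hk => ?_
        rw [mul_sum]
        refine sum_subset (range_subset_range.2 (by simpa using hk)) fun m _ hm => ?_
        rw [Nat.choose_eq_zero_of_lt (n := k) (by simpa using hm)]
        simp
    _ = ∑ m ∈ range (n + 1), ((∑ k ∈ range (n + 1),
        (-1) ^ (n - k) * (n.choose k : ℤ) * k.choose m : ℤ) : R) * a m := by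
        rw [sum_comm]
        push_cast
        simp only [sum_mul, mul_assoc]
    _ = a n := by simp [Int.alternating_sum_range_choose_mul_choose]

-- `c < 0` is allowed: `Real.log` is `log |·|` on negative reals.
theorem tendsto_log_mul_div_log {g : ℝ → ℝ} {c : ℝ} (hg : Tendsto g (𝓝[>] 0) (𝓝 c))
    (hc : c ≠ 0) :
    Tendsto (fun x => log (x * g x) / log x) (𝓝[>] 0) (𝓝 1) := by
  have hlog : Tendsto (fun x => log (g x) / log x) (𝓝[>] 0) (𝓝 0) :=
    ((continuousAt_log hc).tendsto.comp hg).div_atBot tendsto_log_nhdsGT_zero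
  have hsplit : ∀ᶠ x in 𝓝[>] (0 : ℝ), 1 + log (g x) / log x = log (x * g x) / log x := by
    filter_upwards [hg.eventually_ne hc, self_mem_nhdsWithin,
      nhdsWithin_le_nhds (Iio_mem_nhds one_pos)] with x hgx (hx : 0 < x) (hx1 : x < 1)
    rw [log_mul hx.ne' hgx, add_div, div_self (log_neg hx hx1).ne]
  simpa using (hlog.const_add 1).congr' hsplit

theorem tendsto_log_div_log_of_hasDerivAt {f : ℝ → ℝ} {c : ℝ} (hf : HasDerivAt f c 0)
    (hf0 : f 0 = 0) (hc : c ≠ 0) :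
    Tendsto (fun x => log (f x) / log x) (𝓝[>] 0) (𝓝 1) := by
  have hslope : Tendsto (fun x => f x / x) (𝓝[>] 0) (𝓝 c) := by
    refine ((hasDerivAt_iff_tendsto_slope.1 hf).mono_left
      (nhdsWithin_mono _ fun x hx => ne_of_gt hx)).congr fun x => ?_
    simp [slope_def_field, hf0]
  refine (tendsto_log_mul_div_log hslope hc).congr' ?_
  filter_upwards [self_mem_nhdsWithin] with x (hx : 0 < x)
  rw [mul_div_cancel₀ _ hx.ne']

theorem hasDerivAt_sum_mul_exp {ι : Type*} (s : Finset ι) (w r : ι → ℝ) (x : ℝ) :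
    HasDerivAt (fun y => ∑ i ∈ s, w i * exp (-y * r i))
      (∑ i ∈ s, w i * (-r i * exp (-x * r i))) x := by
  refine HasDerivAt.fun_sum fun i _ => ?_
  have := (((hasDerivAt_id x).neg.mul_const (r i)).exp).const_mul (w i)
  simpa [mul_comm] using this

noncomputable def divCoeff (p δ : ℝ) (m : ℕ) : ℝ :=
  (∏ j ∈ Icc 1 (m - 1), (δ - j)) / (m - 1).factorial * p ^ m

theorem divPoly_eq_sum_divCoeff (k : ℕ) (p δ : ℝ) :
    divPoly k p δ = ∑ m ∈ Icc 1 k, (k.choose m : ℝ) * divCoeff p δ m :=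
  sum_congr rfl fun _ _ => by rw [divCoeff, mul_assoc]

theorem divCoeff_ne_zero {p δ : ℝ} (hp : p ≠ 0) (hδ : ∀ j : ℕ, 0 < j → δ ≠ j) (m : ℕ) :
    divCoeff p δ m ≠ 0 := by
  refine mul_ne_zero (div_ne_zero (prod_ne_zero_iff.2 fun j hj => ?_) (by positivity))
    (pow_ne_zero _ hp)
  exact sub_ne_zero.2 (hδ j (mem_Icc.1 hj).1)

theorem sum_range_choose_mul_divCoeff (k : ℕ) (p δ : ℝ) :
    ∑ m ∈ range (k + 1), (k.choose m : ℝ) * divCoeff p δ m = 1 + divPoly k p δ := by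
  simp [sum_range_succ_eq_add_sum_Icc, divCoeff, divPoly_eq_sum_divCoeff]

theorem sum_range_alternating_choose_mul_divPoly {n : ℕ} (hn : n ≠ 0) (p δ : ℝ) :
    ∑ k ∈ range (n + 1), (-1) ^ (n - k) * (n.choose k : ℝ) * divPoly k p δ = divCoeff p δ n := by
  have h := sum_range_alternating_choose_mul_sum_choose (divCoeff p δ) n
  simpa only [sum_range_choose_mul_divCoeff, mul_add, mul_one, sum_add_distrib,
    sum_range_alternating_choose ℝ hn, zero_add] using h

theorem outageProb_eq_neg_one_pow_mul_sum (n : ℕ) (p δ Δ : ℝ) :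
    outageProb n p δ Δ = (-1) ^ n *
      ∑ k ∈ range (n + 1), (-1) ^ (n - k) * (n.choose k : ℝ) * exp (-Δ * divPoly k p δ) := by
  rw [outageProb, mul_sum, sum_range_succ_eq_add_sum_Icc, sub_eq_add_neg, ← sum_neg_distrib]
  congr 1
  · simp [divPoly, ← pow_add, ← two_mul]
  · refine sum_congr rfl fun k hk => ?_
    rw [← mul_assoc, ← mul_assoc, neg_one_pow_mul_neg_one_pow_sub (mem_Icc.1 hk).2, pow_succ]
    ring

theorem outageProb_zero {n : ℕ} (hn : n ≠ 0) (p δ : ℝ) : outageProb n p δ 0 = 0 := by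
  simp [outageProb_eq_neg_one_pow_mul_sum, sum_range_alternating_choose ℝ hn]

theorem hasDerivAt_outageProb_zero {n : ℕ} (hn : n ≠ 0) (p δ : ℝ) :
    HasDerivAt (fun Δ => outageProb n p δ Δ) (-(-1) ^ n * divCoeff p δ n) 0 := by
  have h := (hasDerivAt_sum_mul_exp (range (n + 1)) (fun k => (-1) ^ (n - k) * (n.choose k : ℝ))
    (fun k => divPoly k p δ) 0).const_mul ((-1) ^ n)
  simp only [← outageProb_eq_neg_one_pow_mul_sum, neg_zero, zero_mul, exp_zero, mul_one,
    mul_neg, sum_neg_distrib, sum_range_alternating_choose_mul_divPoly hn] at h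
  simpa using h

theorem stmt6_general (n : ℕ) (hn : 1 ≤ n) (p : ℝ) (hp0 : 0 < p)
    (δ : ℝ) (hδ1 : δ < 1) :
    Tendsto (fun Δ : ℝ => δ * Real.log (outageProb n p δ Δ) / Real.log Δ)
      (nhdsWithin 0 (Ioi 0)) (nhds δ) := by
  have hn0 : n ≠ 0 := Nat.one_le_iff_ne_zero.1 hn
  have hδ : ∀ j : ℕ, 0 < j → δ ≠ j := fun j hj => (hδ1.trans_le (Nat.one_le_cast.2 hj)).ne
  have hc : -(-1) ^ n * divCoeff p δ n ≠ 0 := by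
    simpa using divCoeff_ne_zero hp0.ne' hδ n
  simpa [mul_div_assoc] using ((tendsto_log_div_log_of_hasDerivAt
    (hasDerivAt_outageProb_zero hn0 p δ) (outageProb_zero hn0 p δ) hc).const_mul δ)

theorem stmt6 (n : ℕ) (hn : 1 ≤ n) (p : ℝ) (hp0 : 0 < p) (hp1 : p ≤ 1)
    (δ : ℝ) (hδ0 : 0 < δ) (hδ1 : δ < 1) :
    Tendsto (fun Δ : ℝ => δ * Real.log (outageProb n p δ Δ) / Real.log Δ)
      (nhdsWithin 0 (Ioi 0)) (nhds δ) :=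
  stmt6_general n hn p hp0 δ hδ1
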